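/- arXiv:1304.1268 — 4 statements merged into one kernel-verified Lean document; each statement's English description precedes it below -/
import Mathlib

section
/- Let {K_i}_{i∈I} be a compact and stable 1-dimensional filtration of a nonempty compact metric space (K,d). If P, Q ∈ K satisfy α(P) < α(Q), then β(P) ≤ α(Q). -/
/-- Lemma: if α(P) < α(Q) then β(P) ≤ α(Q). -/
theorem diFabioFrosini_alpha_lt_alpha
{K : Type*} [MetricSpace K] [CompactSpace K] [Nonempty K]
    (I : Set ℝ) (hIne : I.Nonempty) (hIcomp : IsCompact I)
    (F : ℝ → Set K)
    (hKcomp : ∀ i ∈ I, IsCompact (F i))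
    (hmono : ∀ i ∈ I, ∀ j ∈ I, i ≤ j → F i ⊆ F j)
    (hempty : ∃ i ∈ I, F i = (∅ : Set K))
    (hfull : ∃ i ∈ I, F i = (Set.univ : Set K))
    (hstabA : ∀ im : ℕ → ℝ, (∀ m, im m ∈ I) → ∀ ibar ∈ I,
      Filter.Tendsto im Filter.atTop (nhds ibar) →
      Filter.Tendsto (fun m => Metric.hausdorffDist (F (im m)) (F ibar))
        Filter.atTop (nhds 0) ∧
      Filter.Tendsto
        (fun m => Metric.hausdorffDist (closure ((F (im m))ᶜ)) (closure ((F ibar)ᶜ)))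
        Filter.atTop (nhds 0))
    (hstabB : ∀ i ∈ I, ∀ j ∈ I, i < j → F i ⊆ interior (F j)) :
    ∀ P Q : K,
      sSup {i ∈ I | P ∈ closure ((F i)ᶜ)} < sSup {i ∈ I | Q ∈ closure ((F i)ᶜ)} →
      sInf {i ∈ I | P ∈ F i} ≤ sSup {i ∈ I | Q ∈ closure ((F i)ᶜ)} := by
  intro P Q hlt
  obtain ⟨i0, hi0I, hi0⟩ := hempty
  have hIbdd : BddAbove I := hIcomp.bddAbove
  have hIbddB : BddBelow I := hIcomp.bddBelow
  have hAQne : ({i ∈ I | Q ∈ closure ((F i)ᶜ)}).Nonempty :=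
    ⟨i0, hi0I, by simp [hi0]⟩
  have hAQbdd : BddAbove {i ∈ I | Q ∈ closure ((F i)ᶜ)} :=
    hIbdd.mono fun i hi => hi.1
  have hj : sSup {i ∈ I | Q ∈ closure ((F i)ᶜ)} ∈ I :=
    hIcomp.isClosed.closure_subset
      (closure_mono (fun i hi => hi.1) (csSup_mem_closure hAQne hAQbdd))
  have hPF : P ∈ F (sSup {i ∈ I | Q ∈ closure ((F i)ᶜ)}) := by
    by_contra h
    have hmem : sSup {i ∈ I | Q ∈ closure ((F i)ᶜ)} ∈
        {i ∈ I | P ∈ closure ((F i)ᶜ)} := ⟨hj, subset_closure h⟩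
    have hle := le_csSup (hIbdd.mono fun i (hi : i ∈ {i ∈ I | P ∈ closure ((F i)ᶜ)}) => hi.1) hmem
    exact absurd (lt_of_le_of_lt hle hlt) (lt_irrefl _)
  exact csInf_le (hIbddB.mono fun i (hi : i ∈ {i ∈ I | P ∈ F i}) => hi.1) ⟨hj, hPF⟩
end

section
/- Let {K_i}_{i∈I} be a compact and stable 1-dimensional filtration of a nonempty compact metric space (K,d). If P ∈ K lies on the topological boundary ∂K_i of some set K_i of the filtration (i ∈ I), then α(P) = β(P) = i. -/
/-- Remark: if P ∈ ∂K_i for some i ∈ I, then α(P) = β(P) = i. -/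
theorem diFabioFrosini_boundary
{K : Type*} [MetricSpace K] [CompactSpace K] [Nonempty K]
    (I : Set ℝ) (hIne : I.Nonempty) (hIcomp : IsCompact I)
    (F : ℝ → Set K)
    (hKcomp : ∀ i ∈ I, IsCompact (F i))
    (hmono : ∀ i ∈ I, ∀ j ∈ I, i ≤ j → F i ⊆ F j)
    (hempty : ∃ i ∈ I, F i = (∅ : Set K))
    (hfull : ∃ i ∈ I, F i = (Set.univ : Set K))
    (hstabA : ∀ im : ℕ → ℝ, (∀ m, im m ∈ I) → ∀ ibar ∈ I,
      Filter.Tendsto im Filter.atTop (nhds ibar) →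
      Filter.Tendsto (fun m => Metric.hausdorffDist (F (im m)) (F ibar))
        Filter.atTop (nhds 0) ∧
      Filter.Tendsto
        (fun m => Metric.hausdorffDist (closure ((F (im m))ᶜ)) (closure ((F ibar)ᶜ)))
        Filter.atTop (nhds 0))
    (hstabB : ∀ i ∈ I, ∀ j ∈ I, i < j → F i ⊆ interior (F j)) :
    ∀ i ∈ I, ∀ P ∈ frontier (F i),
      sSup {j ∈ I | P ∈ closure ((F j)ᶜ)} = i ∧ sInf {j ∈ I | P ∈ F j} = i := by
  intro i hi P hP
  have hFicl : IsClosed (F i) := (hKcomp i hi).isClosed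
  have hPF : P ∈ F i := by
    have := hP.1
    rwa [hFicl.closure_eq] at this
  have hPnint : P ∉ interior (F i) := hP.2
  have hub : ∀ j ∈ {j ∈ I | P ∈ closure ((F j)ᶜ)}, j ≤ i := by
    rintro j ⟨hj, hjc⟩
    by_contra h
    push_neg at h
    rw [closure_compl] at hjc
    exact hjc (hstabB i hi j hj h hPF)
  have hiA : i ∈ {j ∈ I | P ∈ closure ((F j)ᶜ)} :=
    ⟨hi, by rw [closure_compl]; exact hPnint⟩
  have hlb : ∀ j ∈ {j ∈ I | P ∈ F j}, i ≤ j := by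
    rintro j ⟨hj, hjF⟩
    by_contra h
    push_neg at h
    exact hPnint (hstabB j hj i hi h hjF)
  have hiB : i ∈ {j ∈ I | P ∈ F j} := ⟨hi, hPF⟩
  exact ⟨le_antisymm (csSup_le ⟨i, hiA⟩ hub) (le_csSup ⟨i, hub⟩ hiA),
    le_antisymm (csInf_le ⟨i, hlb⟩ hiB) (le_csInf ⟨i, hiB⟩ hlb)⟩
end

section
/- Let {K_i}_{i∈I} be a compact and stable 1-dimensional filtration of a nonempty compact metric space (K,d). Then the function α : K → ℝ, P ↦ max{i ∈ I : P ∈ closure(K \ K_i)}, is upper semi-continuous at every point of K. -/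
/-- Lemma: the function α is everywhere upper semi-continuous. -/
theorem diFabioFrosini_alpha_usc
{K : Type*} [MetricSpace K] [CompactSpace K] [Nonempty K]
    (I : Set ℝ) (hIne : I.Nonempty) (hIcomp : IsCompact I)
    (F : ℝ → Set K)
    (hKcomp : ∀ i ∈ I, IsCompact (F i))
    (hmono : ∀ i ∈ I, ∀ j ∈ I, i ≤ j → F i ⊆ F j)
    (hempty : ∃ i ∈ I, F i = (∅ : Set K))
    (hfull : ∃ i ∈ I, F i = (Set.univ : Set K))
    (hstabA : ∀ im : ℕ → ℝ, (∀ m, im m ∈ I) → ∀ ibar ∈ I,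
      Filter.Tendsto im Filter.atTop (nhds ibar) →
      Filter.Tendsto (fun m => Metric.hausdorffDist (F (im m)) (F ibar))
        Filter.atTop (nhds 0) ∧
      Filter.Tendsto
        (fun m => Metric.hausdorffDist (closure ((F (im m))ᶜ)) (closure ((F ibar)ᶜ)))
        Filter.atTop (nhds 0))
    (hstabB : ∀ i ∈ I, ∀ j ∈ I, i < j → F i ⊆ interior (F j)) :
    UpperSemicontinuous (fun P : K => sSup {i ∈ I | P ∈ closure ((F i)ᶜ)}) := by
  classical
  obtain ⟨i0, hi0I, hi0⟩ := hempty
  -- auxiliary facts about the sets A(Q)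
  have hAsub : ∀ Q : K, {i ∈ I | Q ∈ closure ((F i)ᶜ)} ⊆ I := fun Q i hi => hi.1
  have hAbdd : ∀ Q : K, BddAbove {i ∈ I | Q ∈ closure ((F i)ᶜ)} :=
    fun Q => hIcomp.bddAbove.mono (hAsub Q)
  have hAne : ∀ Q : K, ({i ∈ I | Q ∈ closure ((F i)ᶜ)} : Set ℝ).Nonempty := by
    intro Q
    refine ⟨i0, hi0I, ?_⟩
    simp [hi0]
  intro P y hy
  by_contra hcon
  rw [Filter.not_eventually] at hcon
  obtain ⟨Q, hQtend, hQ⟩ := Filter.exists_seq_forall_of_frequently hcon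
  have hQge : ∀ m, y ≤ sSup {i ∈ I | Q m ∈ closure ((F i)ᶜ)} := fun m => not_lt.1 (hQ m)
  -- choose i m ∈ A (Q m) with i m > y - 1/(m+1)
  have hchoose : ∀ m : ℕ, ∃ i ∈ {i ∈ I | Q m ∈ closure ((F i)ᶜ)}, y - 1 / (m + 1) < i := by
    intro m
    refine exists_lt_of_lt_csSup (hAne (Q m)) ?_
    have h1 : (0 : ℝ) < 1 / (m + 1) := by positivity
    have := hQge m
    linarith
  choose i hiA hilt using hchoose
  obtain ⟨ibar, hibarI, φ, hφ, hφtend⟩ := hIcomp.tendsto_subseq (fun m => (hiA m).1)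
  -- y ≤ ibar
  have hyibar : y ≤ ibar := by
    have hlim : Filter.Tendsto (fun m : ℕ => y - 1 / (m + 1 : ℝ)) Filter.atTop (nhds y) := by
      have h0 : Filter.Tendsto (fun m : ℕ => 1 / (m + 1 : ℝ)) Filter.atTop (nhds 0) :=
        tendsto_one_div_add_atTop_nhds_zero_nat
      simpa using (tendsto_const_nhds (x := y)).sub h0
    refine le_of_tendsto_of_tendsto' hlim hφtend ?_
    intro m
    show y - 1 / (m + 1 : ℝ) ≤ i (φ m)
    have h1 : y - 1 / (φ m + 1 : ℝ) < i (φ m) := hilt (φ m)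
    have h2 : (m : ℝ) + 1 ≤ (φ m : ℝ) + 1 := by
      have hm : m ≤ φ m := hφ.le_apply
      have : (m : ℝ) ≤ (φ m : ℝ) := by exact_mod_cast hm
      linarith
    have h3 : 1 / ((φ m : ℝ) + 1) ≤ 1 / ((m : ℝ) + 1) := by
      apply one_div_le_one_div_of_le
      · positivity
      · exact h2
    linarith
  have hSup : sSup {i ∈ I | P ∈ closure ((F i)ᶜ)} < y := hy
  by_cases hc : ∃ᶠ m in Filter.atTop, ibar ≤ i (φ m)
  · -- infinitely many i (φ m) ≥ ibar : then P ∈ closure ((F ibar)ᶜ)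
    obtain ⟨ψ, hψ, hψge⟩ := Filter.extraction_of_frequently_atTop hc
    have hmem : ∀ k, Q (φ (ψ k)) ∈ closure ((F ibar)ᶜ) := by
      intro k
      have hsub : F ibar ⊆ F (i (φ (ψ k))) :=
        hmono ibar hibarI _ (hiA (φ (ψ k))).1 (hψge k)
      exact closure_mono (Set.compl_subset_compl.2 hsub) (hiA (φ (ψ k))).2
    have htend : Filter.Tendsto (fun k => Q (φ (ψ k))) Filter.atTop (nhds P) :=
      hQtend.comp ((hφ.comp hψ).tendsto_atTop)
    have hPmem : P ∈ closure ((F ibar)ᶜ) :=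
      isClosed_closure.mem_of_tendsto htend (Filter.Eventually.of_forall hmem)
    have : ibar ≤ sSup {i ∈ I | P ∈ closure ((F i)ᶜ)} :=
      le_csSup (hAbdd P) ⟨hibarI, hPmem⟩
    linarith
  · -- eventually i (φ m) < ibar
    rw [Filter.not_frequently] at hc
    have hev : ∀ᶠ m in Filter.atTop, i (φ m) < ibar := by
      filter_upwards [hc] with m hm using lt_of_not_ge hm
    have hkey : ∀ᶠ m in Filter.atTop, i (φ m) ≤ sSup {j ∈ I | P ∈ closure ((F j)ᶜ)} := by
      filter_upwards [hev] with m hm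
      -- show i (φ m) ∈ A(P)
      have hevk : ∀ᶠ k in Filter.atTop, i (φ m) < i (φ k) :=
        hφtend.eventually (eventually_gt_nhds hm)
      have hmemk : ∀ᶠ k in Filter.atTop, Q (φ k) ∈ closure ((F (i (φ m)))ᶜ) := by
        filter_upwards [hevk] with k hk
        have hsub : F (i (φ m)) ⊆ F (i (φ k)) :=
          hmono _ (hiA (φ m)).1 _ (hiA (φ k)).1 hk.le
        exact closure_mono (Set.compl_subset_compl.2 hsub) (hiA (φ k)).2
      have htend : Filter.Tendsto (fun k => Q (φ k)) Filter.atTop (nhds P) :=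
        hQtend.comp hφ.tendsto_atTop
      have hPmem : P ∈ closure ((F (i (φ m)))ᶜ) :=
        isClosed_closure.mem_of_tendsto htend hmemk
      exact le_csSup (hAbdd P) ⟨(hiA (φ m)).1, hPmem⟩
    have : ibar ≤ sSup {j ∈ I | P ∈ closure ((F j)ᶜ)} :=
      le_of_tendsto hφtend hkey
    linarith
end

section
/- Let {K_i}_{i∈I} be a compact and stable 1-dimensional filtration of a nonempty compact metric space (K,d). Then the function β : K → ℝ, P ↦ min{i ∈ I : P ∈ K_i}, is lower semi-continuous at every point of K. -/
/-- Lemma: the function β is everywhere lower semi-continuous. -/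
theorem diFabioFrosini_beta_lsc
{K : Type*} [MetricSpace K] [CompactSpace K] [Nonempty K]
    (I : Set ℝ) (hIne : I.Nonempty) (hIcomp : IsCompact I)
    (F : ℝ → Set K)
    (hKcomp : ∀ i ∈ I, IsCompact (F i))
    (hmono : ∀ i ∈ I, ∀ j ∈ I, i ≤ j → F i ⊆ F j)
    (hempty : ∃ i ∈ I, F i = (∅ : Set K))
    (hfull : ∃ i ∈ I, F i = (Set.univ : Set K))
    (hstabA : ∀ im : ℕ → ℝ, (∀ m, im m ∈ I) → ∀ ibar ∈ I,
      Filter.Tendsto im Filter.atTop (nhds ibar) →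
      Filter.Tendsto (fun m => Metric.hausdorffDist (F (im m)) (F ibar))
        Filter.atTop (nhds 0) ∧
      Filter.Tendsto
        (fun m => Metric.hausdorffDist (closure ((F (im m))ᶜ)) (closure ((F ibar)ᶜ)))
        Filter.atTop (nhds 0))
    (hstabB : ∀ i ∈ I, ∀ j ∈ I, i < j → F i ⊆ interior (F j)) :
    LowerSemicontinuous (fun P : K => sInf {i ∈ I | P ∈ F i}) := by
  intro P y hy
  obtain ⟨ifull, hifullI, hifull⟩ := hfull
  have hSne : ∀ Q : K, ({i ∈ I | Q ∈ F i}).Nonempty := fun Q =>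
    ⟨ifull, hifullI, by simp [hifull]⟩
  have hbdd : ∀ Q : K, BddBelow {i ∈ I | Q ∈ F i} := fun Q =>
    hIcomp.bddBelow.mono (fun i hi => hi.1)
  by_cases hcase : ∃ j ∈ I, y < j ∧ j < sInf {i ∈ I | P ∈ F i}
  · obtain ⟨j, hjI, hyj, hjt⟩ := hcase
    have hPj : P ∉ F j := fun h => absurd (csInf_le (hbdd P) ⟨hjI, h⟩) (not_le.2 hjt)
    have hopen : IsOpen (F j)ᶜ := (hKcomp j hjI).isClosed.isOpen_compl
    filter_upwards [hopen.mem_nhds hPj] with Q hQ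
    refine lt_of_lt_of_le hyj (le_csInf (hSne Q) ?_)
    rintro i ⟨hiI, hiF⟩
    by_contra h
    push_neg at h
    exact hQ (hmono i hiI j hjI h.le hiF)
  · push_neg at hcase
    by_cases hT : (I ∩ Set.Iic y).Nonempty
    · set s := sSup (I ∩ Set.Iic y) with hs
      have hTcl : IsClosed (I ∩ Set.Iic y) := hIcomp.isClosed.inter isClosed_Iic
      have hTbdd : BddAbove (I ∩ Set.Iic y) := ⟨y, fun x hx => hx.2⟩
      have hsmem : s ∈ I ∩ Set.Iic y := hTcl.csSup_mem hT hTbdd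
      have hPs : P ∉ F s := fun h =>
        absurd (csInf_le (hbdd P) ⟨hsmem.1, h⟩) (not_le.2 (lt_of_le_of_lt hsmem.2 hy))
      have hopen : IsOpen (F s)ᶜ := (hKcomp s hsmem.1).isClosed.isOpen_compl
      filter_upwards [hopen.mem_nhds hPs] with Q hQ
      refine lt_of_lt_of_le hy (le_csInf (hSne Q) ?_)
      rintro i ⟨hiI, hiF⟩
      by_contra h
      push_neg at h
      have hiy : i ≤ y := by
        by_contra h'
        push_neg at h'
        exact absurd h (not_lt.2 (hcase i hiI h'))
      exact hQ (hmono i hiI s hsmem.1 (le_csSup hTbdd ⟨hiI, hiy⟩) hiF)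
    · filter_upwards with Q
      refine lt_of_lt_of_le hy (le_csInf (hSne Q) ?_)
      rintro i ⟨hiI, hiF⟩
      by_contra h
      push_neg at h
      have hiy : i ≤ y := by
        by_contra h'
        push_neg at h'
        exact absurd h (not_lt.2 (hcase i hiI h'))
      exact hT ⟨i, hiI, hiy⟩
end
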